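/- arXiv:1204.5214 — 2 statements merged into one kernel-verified Lean document; each statement's English description precedes it below -/
import Mathlib

section
/- Let A be a prime unital associative algebra over a field F and let e ∈ A be an idempotent with e ≠ 0, e ≠ 1, such that eAe = Fe, (1-e)A(1-e) = F(1-e), and eA(1-e)Ae ≠ 0. Then A contains a set of 2×2 matrix units {u_{ij} : i,j = 1,2} with u_11 = e, u_22 = 1-e, and A is isomorphic as an F-algebra to M_2(F). -/
/-!
Write `f = 1 - e`. Rescaling an element of `eAfAe = Fe` gives `p ∈ eAf` and `q ∈ fAe` with
`pq = e`. Then `qp ∈ fAf = Ff`, and `qpq = q ≠ 0` forces `qp = f`. Now `p² = q² = 0` and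
`pq + qp = 1`, so `pq, p, q, qp` are `2 × 2` matrix units. Finally, for matrix units with
`u₀₀Au₀₀ = Fu₀₀`, the map `M ↦ ∑ Mᵢⱼ uᵢⱼ` is an isomorphism `Mₙ(F) ≃ A`, since
`uₖₖ a uₗₗ = uₖ₀ (u₀ₖ a uₗ₀) u₀ₗ ∈ F uₖₗ`.
-/

open Finset

structure IsMatrixUnits {A n : Type*} [Semiring A] [Fintype n] [DecidableEq n]
    (u : n → n → A) : Prop where
  mul_eq : ∀ i j k l, u i j * u k l = if j = k then u i l else 0
  sum_diag : ∑ i, u i i = 1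

namespace IsMatrixUnits

variable {R A n : Type*} [Semiring A] [Fintype n] [DecidableEq n] {u : n → n → A}

theorem mul_same (hu : IsMatrixUnits u) (i j l : n) : u i j * u j l = u i l := by
  simp [hu.mul_eq]

section Algebra

variable [CommSemiring R] [Algebra R A]

variable (R) in
def toAlgHom (hu : IsMatrixUnits u) : Matrix n n R →ₐ[R] A where
  toFun M := ∑ i, ∑ j, M i j • u i j
  map_one' := by simp [Matrix.one_apply, hu.sum_diag]
  map_mul' M N := by
    simp only [Matrix.mul_apply, sum_smul, sum_mul_sum, smul_mul_smul_comm, hu.mul_eq, smul_ite,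
      smul_zero, mul_smul, sum_ite_irrel, sum_const_zero, sum_ite_eq', mem_univ, if_true]
    exact sum_congr rfl fun i _ => sum_comm
  map_zero' := by simp
  map_add' M N := by simp [add_smul, sum_add_distrib]
  commutes' r := by
    simp [Algebra.algebraMap_eq_smul_one, Matrix.algebraMap_matrix_apply, ← hu.sum_diag, smul_sum]

theorem toAlgHom_apply (hu : IsMatrixUnits u) (M : Matrix n n R) :
    hu.toAlgHom R M = ∑ i, ∑ j, M i j • u i j := rfl

theorem mul_toAlgHom_mul (hu : IsMatrixUnits u) (M : Matrix n n R) (i k l j : n) :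
    u i k * hu.toAlgHom R M * u l j = M k l • u i j := by
  simp [toAlgHom_apply, mul_sum, sum_mul, hu.mul_eq]

theorem toAlgHom_injective (hu : IsMatrixUnits u) (i : n)
    (htors : Function.Injective fun c : R => c • u i i) : Function.Injective (hu.toAlgHom R) := by
  intro M N hMN
  ext k l
  apply htors
  simp only [← hu.mul_toAlgHom_mul, hMN]

theorem toAlgHom_surjective (hu : IsMatrixUnits u) (i : n)
    (hcorner : ∀ x : A, ∃ c : R, u i i * x * u i i = c • u i i) :
    Function.Surjective (hu.toAlgHom R) := by
  intro a
  choose c hc using fun k l => hcorner (u i k * a * u l i)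
  have hentry (k l : n) : c k l • u k l = u k k * a * u l l := by
    calc c k l • u k l = u k i * (c k l • u i i) * u i l := by
          rw [mul_smul_comm, smul_mul_assoc, hu.mul_same, hu.mul_same]
      _ = u k k * a * u l l := by
          simp only [← hc, ← mul_assoc, hu.mul_same]
          simp only [mul_assoc, hu.mul_same]
  refine ⟨Matrix.of c, ?_⟩
  simp only [toAlgHom_apply, Matrix.of_apply, hentry, ← sum_mul, ← mul_sum, hu.sum_diag,
    one_mul, mul_one]

end Algebra

end IsMatrixUnits

namespace IsMatrixUnits

variable {F A n : Type*} [Field F] [Ring A] [Algebra F A] [Fintype n] [DecidableEq n]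
  {u : n → n → A}

theorem nonempty_algEquiv_matrix (hu : IsMatrixUnits u) (i : n) (hi : u i i ≠ 0)
    (hcorner : ∀ x : A, ∃ c : F, u i i * x * u i i = c • u i i) :
    Nonempty (A ≃ₐ[F] Matrix n n F) :=
  ⟨(AlgEquiv.ofBijective (hu.toAlgHom F)
    ⟨hu.toAlgHom_injective i (smul_left_injective F hi), hu.toAlgHom_surjective i hcorner⟩).symm⟩

end IsMatrixUnits

theorem isMatrixUnits_of_mul_self_eq_zero {A : Type*} [Semiring A] {p q : A} (hp : p * p = 0)
    (hq : q * q = 0) (hpq : p * q + q * p = 1) : IsMatrixUnits ![![p * q, p], ![q, q * p]] := by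
  have hpqp : p * q * p = p := by
    rw [← add_zero (p * q * p), ← zero_mul q, ← hp, mul_assoc, mul_assoc, ← mul_add, add_comm, hpq,
      mul_one]
  have hqpq : q * p * q = q := by
    rw [← add_zero (q * p * q), ← zero_mul p, ← hq, mul_assoc, mul_assoc, ← mul_add, hpq, mul_one]
  have hp' (x : A) : x * p * p = 0 := by rw [mul_assoc, hp, mul_zero]
  have hq' (x : A) : x * q * q = 0 := by rw [mul_assoc, hq, mul_zero]
  refine ⟨fun i j k l => ?_, by simpa [Fin.sum_univ_two] using hpq⟩
  fin_cases i <;> fin_cases j <;> fin_cases k <;> fin_cases l <;>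
    simp [← mul_assoc, hpqp, hqpq, hp, hq, hp', hq']

theorem mul_self_eq_zero_of_mul_mul_eq {A : Type*} [Semiring A] {f g p : A} (hgf : g * f = 0)
    (hp : f * p * g = p) : p * p = 0 := by
  rw [← hp, mul_assoc, ← mul_assoc g, ← mul_assoc g, hgf]
  simp

section Corners

variable {F A : Type*} [Field F] [Ring A] [Algebra F A] {e p q : A}

theorem exists_mul_eq_of_corner_eq_span (he : IsIdempotentElem e)
    (hcorner : ∀ x : A, ∃ c : F, e * x * e = c • e)
    (hnz : ∃ a b : A, e * a * (1 - e) * b * e ≠ 0) :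
    ∃ p q : A, e * p * (1 - e) = p ∧ (1 - e) * q * e = q ∧ p * q = e := by
  obtain ⟨a, b, hab⟩ := hnz
  obtain ⟨c, hc⟩ := hcorner (a * (1 - e) * b)
  have habc : e * a * (1 - e) * b * e = c • e := by rw [← hc]; simp only [mul_assoc]
  have hc0 : c ≠ 0 := by rintro rfl; exact hab (by rw [habc, zero_smul])
  refine ⟨c⁻¹ • (e * a * (1 - e)), (1 - e) * b * e, ?_, ?_, ?_⟩
  · rw [mul_smul_comm, smul_mul_assoc]
    simp only [← mul_assoc, he.eq]
    simp only [mul_assoc, he.one_sub.eq]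
  · simp only [← mul_assoc, he.one_sub.eq]
    simp only [mul_assoc, he.eq]
  · rw [smul_mul_assoc, inv_smul_eq_iff₀ hc0, ← habc]
    simp only [← mul_assoc, mul_assoc _ (1 - e) (1 - e), he.one_sub.eq]

theorem mul_eq_one_sub_of_corner_eq_span (he : IsIdempotentElem e) (he0 : e ≠ 0)
    (hcorner : ∀ x : A, ∃ c : F, (1 - e) * x * (1 - e) = c • (1 - e))
    (hp : e * p * (1 - e) = p) (hq : (1 - e) * q * e = q) (hpq : p * q = e) :
    q * p = 1 - e := by
  have hfq : (1 - e) * q = q := by rw [← hq, ← mul_assoc, ← mul_assoc, he.one_sub.eq]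
  have hqe : q * e = q := by rw [← hq, mul_assoc, he.eq]
  have hpf : p * (1 - e) = p := by rw [← hp, mul_assoc, he.one_sub.eq]
  obtain ⟨d, hd⟩ := hcorner (q * p)
  have hqp : q * p = d • (1 - e) := by rw [← hd, ← mul_assoc, hfq, mul_assoc, hpf]
  have hq0 : q ≠ 0 := by rintro rfl; exact he0 (by rw [← hpq, mul_zero])
  have hdq : d • q = (1 : F) • q :=
    calc d • q = d • (1 - e) * q := by rw [smul_mul_assoc, hfq]
      _ = q * (p * q) := by rw [← hqp, mul_assoc]
      _ = (1 : F) • q := by rw [hpq, hqe, one_smul]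
  rw [hqp, smul_left_injective F hq0 hdq, one_smul]

end Corners

theorem prime_with_small_corners_is_M2_general {F A : Type*} [Field F] [Ring A] [Algebra F A]
    (e : A) (he : e * e = e) (he0 : e ≠ 0)
    (hcorner0 : ∀ x : A, ∃ c : F, e * x * e = c • e)
    (hcorner1 : ∀ x : A, ∃ c : F, (1 - e) * x * (1 - e) = c • (1 - e))
    (hnz : ∃ a b : A, e * a * (1 - e) * b * e ≠ 0) :
    (∃ u : Fin 2 → Fin 2 → A,
      u 0 0 = e ∧ u 1 1 = 1 - e ∧ u 0 0 + u 1 1 = 1 ∧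
      ∀ i j k l : Fin 2, u i j * u k l = if j = k then u i l else 0) ∧
    Nonempty (A ≃ₐ[F] Matrix (Fin 2) (Fin 2) F) := by
  obtain ⟨p, q, hp, hq, hpq⟩ := exists_mul_eq_of_corner_eq_span he hcorner0 hnz
  have hqp := mul_eq_one_sub_of_corner_eq_span he he0 hcorner1 hp hq hpq
  have hu := isMatrixUnits_of_mul_self_eq_zero
    (mul_self_eq_zero_of_mul_mul_eq (IsIdempotentElem.one_sub_mul_self he) hp)
    (mul_self_eq_zero_of_mul_mul_eq (IsIdempotentElem.mul_one_sub_self he) hq)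
    (by rw [hpq, hqp, add_sub_cancel])
  refine ⟨⟨_, hpq, hqp, by simpa [Fin.sum_univ_two] using hu.sum_diag, hu.mul_eq⟩, ?_⟩
  exact hu.nonempty_algEquiv_matrix 0 (by simpa [hpq] using he0) (by simpa [hpq] using hcorner0)

/-- Let `A` be a prime unital algebra over `F` with a nontrivial idempotent `e` such
that `eAe = Fe`, `(1-e)A(1-e) = F(1-e)` and `eA(1-e)Ae ≠ 0`. Then `A` contains a set of
`2×2` matrix units with `u₁₁ = e`, `u₂₂ = 1-e`, and `A ≅ M₂(F)` as `F`-algebras. -/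
theorem prime_with_small_corners_is_M2 {F A : Type*} [Field F] [Ring A] [Algebra F A]
    (hprime : ∀ a b : A, (∀ x : A, a * x * b = 0) → a = 0 ∨ b = 0)
    (e : A) (he : e * e = e) (he0 : e ≠ 0) (he1 : e ≠ 1)
    (hcorner0 : ∀ x : A, ∃ c : F, e * x * e = c • e)
    (hcorner1 : ∀ x : A, ∃ c : F, (1 - e) * x * (1 - e) = c • (1 - e))
    (hnz : ∃ a b : A, e * a * (1 - e) * b * e ≠ 0) :
    (∃ u : Fin 2 → Fin 2 → A,
      u 0 0 = e ∧ u 1 1 = 1 - e ∧ u 0 0 + u 1 1 = 1 ∧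
      ∀ i j k l : Fin 2, u i j * u k l = if j = k then u i l else 0) ∧
    Nonempty (A ≃ₐ[F] Matrix (Fin 2) (Fin 2) F) :=
  prime_with_small_corners_is_M2_general e he he0 hcorner0 hcorner1 hnz
end

section
/- Let F be a field of characteristic ≠ 2 and let A = M(1|1) be the algebra of 2×2 matrices over F with grading: even part the diagonal matrices, odd part the off-diagonal matrices. The map φ sending the matrix with entries (x, y; z, w) to the matrix with entries (2x, 2y; z, x+w) is a Lie superautomorphism of A. -/
/-- The off-diagonal (odd) part of a `2×2` matrix. -/
def offPart {F : Type*} [Field F] (m : Matrix (Fin 2) (Fin 2) F) :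
    Matrix (Fin 2) (Fin 2) F :=
  Matrix.of fun i j => if i = j then 0 else m i j

/-- The supercommutator on `M(1|1)` (2×2 matrices graded by diagonal/off-diagonal),
obtained by bilinear extension of `[a,b]_s = ab - (-1)^{|a||b|} ba`; explicitly
`[a,b]_s = ab - ba + 2·b₁a₁` where `a₁, b₁` are the off-diagonal parts. -/
def m11Br {F : Type*} [Field F] (a b : Matrix (Fin 2) (Fin 2) F) :
    Matrix (Fin 2) (Fin 2) F :=
  a * b - b * a + (2 : F) • (offPart b * offPart a)

/-- The map sending `(x, y; z, w)` to `(2x, 2y; z, x+w)`. -/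
def phiM11 {F : Type*} [Field F] (m : Matrix (Fin 2) (Fin 2) F) :
    Matrix (Fin 2) (Fin 2) F :=
  !![2 * m 0 0, 2 * m 0 1; m 1 0, m 0 0 + m 1 1]

/-- Homogeneity of degree `i` in `M(1|1)`: degree `0` matrices are diagonal, degree `1`
matrices have zero diagonal. -/
def m11Homog {F : Type*} [Field F] (i : ZMod 2) (m : Matrix (Fin 2) (Fin 2) F) : Prop :=
  if i = 0 then (∀ p q : Fin 2, p ≠ q → m p q = 0) else (∀ p : Fin 2, m p p = 0)

/-!
The supercommutator of `M(1|1)` has the scalar diagonal `a₀₁b₁₀ + a₁₀b₀₁`, and its off-diagonal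
entries see the diagonals of `a` and `b` only through `x - w`. The map `φ` keeps `x - w`, doubles
the `(0,1)`-entry and fixes the `(1,0)`-entry; so it doubles the diagonal and the `(0,1)`-entry of
a bracket and fixes its `(1,0)`-entry, which is exactly what `φ` does to the bracket itself.
-/

section M11

variable {F : Type*} [Field F]

theorem m11Br_eq (a b : Matrix (Fin 2) (Fin 2) F) :
    m11Br a b =
      !![a 0 1 * b 1 0 + a 1 0 * b 0 1, (a 0 0 - a 1 1) * b 0 1 - (b 0 0 - b 1 1) * a 0 1;
        (b 0 0 - b 1 1) * a 1 0 - (a 0 0 - a 1 1) * b 1 0, a 0 1 * b 1 0 + a 1 0 * b 0 1] := by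
  ext i j
  fin_cases i <;> fin_cases j <;>
    simp [m11Br, offPart, Matrix.mul_apply, Fin.sum_univ_two] <;> ring

theorem phiM11_m11Br (a b : Matrix (Fin 2) (Fin 2) F) :
    phiM11 (m11Br a b) = m11Br (phiM11 a) (phiM11 b) := by
  rw [m11Br_eq, m11Br_eq]
  ext i j
  fin_cases i <;> fin_cases j <;> simp [phiM11] <;> ring

theorem phiM11_add (a b : Matrix (Fin 2) (Fin 2) F) :
    phiM11 (a + b) = phiM11 a + phiM11 b := by
  ext i j
  fin_cases i <;> fin_cases j <;> simp [phiM11] <;> ring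

theorem phiM11_smul (c : F) (a : Matrix (Fin 2) (Fin 2) F) :
    phiM11 (c • a) = c • phiM11 a := by
  ext i j
  fin_cases i <;> fin_cases j <;> simp [phiM11] <;> ring

theorem phiM11_bijective (h2 : (2 : F) ≠ 0) : Function.Bijective (phiM11 (F := F)) := by
  refine Function.bijective_iff_has_inverse.2
    ⟨fun m => !![m 0 0 / 2, m 0 1 / 2; m 1 0, m 1 1 - m 0 0 / 2], ?_, ?_⟩ <;>
  · intro m
    ext i j
    fin_cases i <;> fin_cases j <;> simp [phiM11] <;> field_simp <;> ring

theorem m11Homog_zero_iff (m : Matrix (Fin 2) (Fin 2) F) :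
    m11Homog 0 m ↔ m 0 1 = 0 ∧ m 1 0 = 0 := by
  simp [m11Homog, Fin.forall_fin_two]

theorem m11Homog_iff_of_ne_zero {i : ZMod 2} (hi : i ≠ 0) (m : Matrix (Fin 2) (Fin 2) F) :
    m11Homog i m ↔ m 0 0 = 0 ∧ m 1 1 = 0 := by
  simp [m11Homog, hi, Fin.forall_fin_two]

theorem m11Homog_phiM11 {i : ZMod 2} {m : Matrix (Fin 2) (Fin 2) F} (hm : m11Homog i m) :
    m11Homog i (phiM11 m) := by
  by_cases hi : i = 0
  · subst hi
    obtain ⟨h01, h10⟩ := (m11Homog_zero_iff m).1 hm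
    simp [m11Homog_zero_iff, phiM11, h01, h10]
  · obtain ⟨h00, h11⟩ := (m11Homog_iff_of_ne_zero hi m).1 hm
    simp [m11Homog_iff_of_ne_zero hi, phiM11, h00, h11]

end M11

/-- The map `(x, y; z, w) ↦ (2x, 2y; z, x+w)` is a Lie superautomorphism of `M(1|1)`:
it is linear, bijective, graded, and preserves the supercommutator. -/
theorem phiM11_is_lie_superautomorphism {F : Type*} [Field F] (h2 : (2 : F) ≠ 0) :
    (∀ a b : Matrix (Fin 2) (Fin 2) F, phiM11 (a + b) = phiM11 a + phiM11 b) ∧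
    (∀ (c : F) (a : Matrix (Fin 2) (Fin 2) F), phiM11 (c • a) = c • phiM11 a) ∧
    Function.Bijective (phiM11 (F := F)) ∧
    (∀ i : ZMod 2, ∀ m : Matrix (Fin 2) (Fin 2) F, m11Homog i m → m11Homog i (phiM11 m)) ∧
    (∀ a b : Matrix (Fin 2) (Fin 2) F, phiM11 (m11Br a b) = m11Br (phiM11 a) (phiM11 b)) :=
  ⟨phiM11_add, phiM11_smul, phiM11_bijective h2, fun _ _ => m11Homog_phiM11, phiM11_m11Br⟩
end
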